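/- arXiv:2307.08064 — 5 statements merged into one kernel-verified Lean document; each statement's English description precedes it below -/
import Mathlib

section
/- Let f : [0,∞) → ℝ be a continuous positive function with f' measurable and integrable, and suppose f'(t) + (α − k·f(t)^n)·f(t) ≤ 0 for all t > 0, where n ∈ ℕ, k > 0, and α − k·f(0)^n > 0. Then f(t) < f(0) for all t > 0. -/
open MeasureTheory Set

/-
The right-hand side `-(α - k x^n) x` is negative for `0 < x < c`, where `c > f 0` comes from
`α - k f(0)^n > 0` by continuity. So `f` strictly decreases as long as it stays below `c`; since it
starts below `c`, a first time at which it reaches `c` would already lie below `f 0`, which is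
absurd. Hence `f` is strictly decreasing on every `[0, t]`.
-/

theorem exists_gt_forall_sub_mul_pow_pos {α k x₀ : ℝ} (n : ℕ) (hk : 0 ≤ k)
    (h : 0 < α - k * x₀ ^ n) : ∃ c > x₀, ∀ x, 0 ≤ x → x < c → 0 < α - k * x ^ n := by
  have hev : ∀ᶠ x in nhds x₀, 0 < α - k * x ^ n :=
    ((continuous_const.sub (continuous_const.mul (continuous_pow n))).tendsto x₀).eventually
      (lt_mem_nhds h)
  obtain ⟨c, hc, hIco⟩ := exists_Ico_subset_of_mem_nhds hev ⟨x₀ + 1, lt_add_one x₀⟩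
  refine ⟨c, hc, fun x hx hxc => ?_⟩
  rcases le_or_gt x₀ x with hle | hlt
  · exact hIco ⟨hle, hxc⟩
  · have : k * x ^ n ≤ k * x₀ ^ n := mul_le_mul_of_nonneg_left (pow_le_pow_left₀ hx hlt.le n) hk
    linarith

theorem strictAntiOn_Icc_of_deriv_neg_of_lt {f : ℝ → ℝ} {a b c : ℝ} (hfa : f a < c)
    (hf : ContinuousOn f (Icc a b)) (hneg : ∀ t ∈ Ioo a b, f t < c → deriv f t < 0) :
    StrictAntiOn f (Icc a b) := by
  have hanti : ∀ s ≤ b, (∀ t ∈ Ioo a s, f t < c) → StrictAntiOn f (Icc a s) := by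
    intro s hsb hlt
    refine strictAntiOn_of_deriv_neg (convex_Icc a s) (hf.mono (Icc_subset_Icc_right hsb)) ?_
    rw [interior_Icc]
    exact fun t ht => hneg t ⟨ht.1, ht.2.trans_le hsb⟩ (hlt t ht)
  refine hanti b le_rfl fun t ht => ?_
  by_contra! hct
  have hT : IsCompact (Icc a b ∩ f ⁻¹' Ici c) :=
    isCompact_Icc.of_isClosed_subset (hf.preimage_isClosed_of_isClosed isClosed_Icc isClosed_Ici)
      inter_subset_left
  obtain ⟨s, ⟨hs, hcs⟩, hleast⟩ := hT.exists_isLeast ⟨t, Ioo_subset_Icc_self ht, hct⟩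
  have has : a < s := hs.1.lt_of_ne (by rintro rfl; exact (lt_of_lt_of_le hfa hcs).false)
  have hbelow : ∀ u ∈ Ioo a s, f u < c := fun u hu => by
    by_contra! hcu
    exact (hleast ⟨⟨hu.1.le, hu.2.le.trans hs.2⟩, hcu⟩).not_gt hu.2
  have hfs : f s < f a :=
    hanti s hs.2 hbelow (left_mem_Icc.2 has.le) (right_mem_Icc.2 has.le) has
  exact absurd hcs (not_le.2 (hfs.trans hfa))

theorem comparison_decay_general (f : ℝ → ℝ) (α k : ℝ) (n : ℕ)
    (hcont : ContinuousOn f (Ici 0))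
    (hpos : ∀ t ≥ (0:ℝ), 0 < f t)
    (hk : 0 < k)
    (hineq : ∀ t > (0:ℝ), deriv f t + (α - k * f t ^ n) * f t ≤ 0)
    (hinit : 0 < α - k * f 0 ^ n) :
    ∀ t > (0:ℝ), f t < f 0 := by
  intro t ht
  obtain ⟨c, hc, hrate⟩ := exists_gt_forall_sub_mul_pow_pos n hk.le hinit
  have hneg : ∀ s ∈ Ioo 0 t, f s < c → deriv f s < 0 := fun s hs hfs => by
    have hfs_pos := hpos s hs.1.le
    have := mul_pos (hrate (f s) hfs_pos.le hfs) hfs_pos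
    linarith [hineq s hs.1]
  exact strictAntiOn_Icc_of_deriv_neg_of_lt hc (hcont.mono Icc_subset_Ici_self) hneg
    (left_mem_Icc.2 ht.le) (right_mem_Icc.2 ht.le) ht

/-- Comparison lemma: if `f` is continuous and positive on `[0,∞)`, `f'` is measurable and
integrable, `f'(t) + (α - k f(t)ⁿ) f(t) ≤ 0` for `t > 0`, with `k > 0` and
`α - k f(0)ⁿ > 0`, then `f(t) < f(0)` for all `t > 0`. -/
theorem comparison_decay (f : ℝ → ℝ) (α k : ℝ) (n : ℕ) (hn : 0 < n)
    (hcont : ContinuousOn f (Ici 0))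
    (hpos : ∀ t ≥ (0:ℝ), 0 < f t)
    (hdiff : ∀ t > (0:ℝ), DifferentiableAt ℝ f t)
    (hmeas : Measurable (deriv f))
    (hint : IntegrableOn (deriv f) (Ioi 0))
    (hk : 0 < k)
    (hineq : ∀ t > (0:ℝ), deriv f t + (α - k * f t ^ n) * f t ≤ 0)
    (hinit : 0 < α - k * f 0 ^ n) :
    ∀ t > (0:ℝ), f t < f 0 :=
  comparison_decay_general f α k n hcont hpos hk hineq hinit
end

section
/- Let u and its m-th derivative D^m u belong to L²(0,L), with m a positive integer. Then for every integer i with 0 ≤ i < m there exist constants A₁, A₂ depending only on L, m, i such that ‖D^i u‖_{L²(0,L)} ≤ A₁‖D^m u‖^{i/m}_{L²(0,L)}·‖u‖^{1−i/m}_{L²(0,L)} + A₂‖u‖_{L²(0,L)}. -/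
/-!
On an interval of length `l`, pick points in the outer thirds where `v²` is at most three times its
mean; the mean value theorem between them gives a point `ξ` with `l³ v'(ξ)² ≤ 108 ∫ v²`, and
integrating `v''` from `ξ` bounds `v'` everywhere, so `∫ v'² ≤ 216 l⁻² ∫ v² + 2 l² ∫ v''²`.
Cutting `(0, L)` into pieces of length at most `ε / 2` gives `‖v'‖ ≤ ε ‖v''‖ + (C / ε) ‖v‖` for
`0 < ε ≤ 1`. Applied to `v = Dᵏu`, this is an inequality between consecutive terms of
`bₖ = ‖Dᵏu‖`, which iterates to `bᵢ ≤ εᵐ⁻ⁱ bₘ + A ε⁻ⁱ b₀`; the choice `εᵐ = b₀ / bₘ` (or `ε = 1`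
when `b₀ ≥ bₘ`) turns this into the multiplicative bound.
-/

open MeasureTheory Set Filter Topology

theorem exists_mul_le_setIntegral {g : ℝ → ℝ} {s : Set ℝ} {c d : ℝ} (hg : IntegrableOn g s)
    (hg0 : 0 ≤ g) (hcd : c < d) (hsub : Ioo c d ⊆ s) :
    ∃ p ∈ Ioo c d, (d - c) * g p ≤ ∫ x in s, g x := by
  obtain ⟨p, hp, hle⟩ := exists_le_setAverage (μ := volume) (s := Ioo c d) (by simp [hcd])
    (by simp) (hg.mono_set hsub)
  refine ⟨p, hp, ?_⟩
  rw [setAverage_eq, measureReal_def, Real.volume_Ioo, ENNReal.toReal_ofReal (sub_pos.2 hcd).le,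
    smul_eq_mul, le_inv_mul_iff₀ (sub_pos.2 hcd)] at hle
  exact hle.trans (setIntegral_mono_set hg (.of_forall hg0) hsub.eventuallyLE)

theorem sq_setIntegral_abs_le {α : Type*} [MeasurableSpace α] {μ : Measure α} {s : Set α}
    {g : α → ℝ} (hs : μ s ≠ ⊤) (hg : IntegrableOn g s μ)
    (hg2 : IntegrableOn (fun x => g x ^ 2) s μ) :
    (∫ x in s, |g x| ∂μ) ^ 2 ≤ μ.real s * ∫ x in s, g x ^ 2 ∂μ := by
  rcases eq_or_ne (μ s) 0 with hs0 | hs0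
  · simp [setIntegral_measure_zero _ hs0]
  have hpos : 0 < μ.real s := ENNReal.toReal_pos hs0 hs
  have jensen := (Even.convexOn_pow (n := 2) even_two).map_set_average_le
    (continuous_pow 2).continuousOn isClosed_univ hs0 hs (by simp) hg.abs
    (by simpa [Function.comp_def] using hg2)
  simp only [setAverage_eq, smul_eq_mul, sq_abs] at jensen
  calc (∫ x in s, |g x| ∂μ) ^ 2
      = μ.real s ^ 2 * ((μ.real s)⁻¹ * ∫ x in s, |g x| ∂μ) ^ 2 := by field_simp
    _ ≤ μ.real s ^ 2 * ((μ.real s)⁻¹ * ∫ x in s, g x ^ 2 ∂μ) := by gcongr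
    _ = μ.real s * ∫ x in s, g x ^ 2 ∂μ := by field_simp

theorem abs_sub_le_setIntegral_abs_deriv {f : ℝ → ℝ} (hf : Differentiable ℝ f)
    (hf' : Continuous (deriv f)) {a b x y : ℝ} (hx : x ∈ Icc a b) (hy : y ∈ Icc a b) :
    |f x - f y| ≤ ∫ t in Ioc a b, |deriv f t| := by
  rw [← intervalIntegral.integral_deriv_eq_sub (fun t _ => hf t) (hf'.intervalIntegrable y x)]
  refine (intervalIntegral.norm_integral_le_integral_norm_uIoc (f := deriv f)).trans ?_
  have hsub : uIoc y x ⊆ Ioc a b := by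
    rw [← uIoc_of_le (hx.1.trans hx.2)]
    exact uIoc_subset_uIoc_of_uIcc_subset_uIcc
      (uIcc_subset_uIcc (Icc_subset_uIcc hy) (Icc_subset_uIcc hx))
  exact setIntegral_mono_set (hf'.abs.integrableOn_Icc.mono_set Ioc_subset_Icc_self)
    (.of_forall fun _ => abs_nonneg _) hsub.eventuallyLE

theorem exists_sq_deriv_le {v : ℝ → ℝ} (hv : Differentiable ℝ v) {a b : ℝ} (hab : a < b) :
    ∃ ξ ∈ Ioo a b, (b - a) ^ 3 * deriv v ξ ^ 2 ≤ 108 * ∫ x in Ioc a b, v x ^ 2 := by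
  set l := b - a
  have hl : 0 < l := sub_pos.2 hab
  have hint : IntegrableOn (fun x => v x ^ 2) (Ioc a b) :=
    (hv.continuous.pow 2).integrableOn_Icc.mono_set Ioc_subset_Icc_self
  obtain ⟨p, hp, hvp⟩ := exists_mul_le_setIntegral hint (fun x => sq_nonneg (v x))
    (show a < a + l / 3 by linarith)
    (Ioo_subset_Ioc_self.trans' (Ioo_subset_Ioo_right (by linarith)))
  obtain ⟨q, hq, hvq⟩ := exists_mul_le_setIntegral hint (fun x => sq_nonneg (v x))
    (show b - l / 3 < b by linarith)
    (Ioo_subset_Ioc_self.trans' (Ioo_subset_Ioo_left (by linarith)))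
  simp only [add_sub_cancel_left, sub_sub_cancel] at hvp hvq
  have hpq : l / 3 ≤ q - p := by linarith [hp.2, hq.1]
  obtain ⟨ξ, hξ, hslope⟩ := exists_deriv_eq_slope v (show p < q by linarith)
    hv.continuous.continuousOn hv.differentiableOn
  refine ⟨ξ, ⟨hp.1.trans hξ.1, hξ.2.trans hq.2⟩, ?_⟩
  have hdiff : (q - p) * deriv v ξ = v q - v p := by
    rw [hslope]; field_simp [show q - p ≠ 0 by linarith]
  calc l ^ 3 * deriv v ξ ^ 2 = 9 * l * ((l / 3) ^ 2 * deriv v ξ ^ 2) := by ring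
    _ ≤ 9 * l * ((q - p) ^ 2 * deriv v ξ ^ 2) := by gcongr
    _ = 9 * l * (v q - v p) ^ 2 := by rw [← hdiff]; ring
    _ ≤ 9 * l * (2 * (v p ^ 2 + v q ^ 2)) := by gcongr; nlinarith [sq_nonneg (v p + v q)]
    _ = 54 * (l / 3 * v p ^ 2) + 54 * (l / 3 * v q ^ 2) := by ring
    _ ≤ 108 * ∫ x in Ioc a b, v x ^ 2 := by linarith

theorem integral_sq_deriv_le {v : ℝ → ℝ} (hv : ContDiff ℝ 2 v) {a b : ℝ} (hab : a < b) :
    ∫ x in a..b, deriv v x ^ 2 ≤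
      216 / (b - a) ^ 2 * (∫ x in a..b, v x ^ 2) +
        2 * (b - a) ^ 2 * ∫ x in a..b, deriv (deriv v) x ^ 2 := by
  have hv' : ContDiff ℝ 1 (deriv v) := hv.iterate_deriv' 1 1
  have hv'' : Continuous (deriv (deriv v)) := hv'.continuous_deriv le_rfl
  simp only [intervalIntegral.integral_of_le hab.le]
  set l := b - a
  have hl : 0 < l := sub_pos.2 hab
  obtain ⟨ξ, hξ, hξ_sq⟩ := exists_sq_deriv_le (hv.differentiable (by norm_num)) hab
  set J := ∫ t in Ioc a b, |deriv (deriv v) t|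
  have hJ : J ^ 2 ≤ l * ∫ x in Ioc a b, deriv (deriv v) x ^ 2 := by
    simpa [Real.volume_real_Ioc_of_le hab.le] using
      sq_setIntegral_abs_le (μ := volume) (s := Ioc a b) measure_Ioc_lt_top.ne
        (hv''.integrableOn_Icc.mono_set Ioc_subset_Icc_self)
        ((hv''.pow 2).integrableOn_Icc.mono_set Ioc_subset_Icc_self)
  have hpointwise : ∀ x ∈ Ioc a b, ‖deriv v x ^ 2‖ ≤ 2 * deriv v ξ ^ 2 + 2 * J ^ 2 := by
    intro x hx
    have h := abs_sub_le_setIntegral_abs_deriv (hv'.differentiable one_ne_zero) hv''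
      (Ioc_subset_Icc_self hx) (Ioo_subset_Icc_self hξ)
    have h2 : (deriv v x - deriv v ξ) ^ 2 ≤ J ^ 2 := by
      rw [← sq_abs]; gcongr
    rw [Real.norm_of_nonneg (sq_nonneg _)]
    nlinarith [sq_nonneg (deriv v x - 2 * deriv v ξ)]
  have hξ_term : 2 * deriv v ξ ^ 2 * l ≤ 216 / l ^ 2 * ∫ x in Ioc a b, v x ^ 2 := by
    rw [div_mul_eq_mul_div, le_div_iff₀ (by positivity)]; nlinarith
  calc ∫ x in Ioc a b, deriv v x ^ 2
      ≤ ‖∫ x in Ioc a b, deriv v x ^ 2‖ := le_abs_self _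
    _ ≤ (2 * deriv v ξ ^ 2 + 2 * J ^ 2) * l := by
      simpa [Real.volume_real_Ioc_of_le hab.le] using
        norm_setIntegral_le_of_norm_le_const (μ := volume) measure_Ioc_lt_top hpointwise
    _ = 2 * deriv v ξ ^ 2 * l + 2 * l * J ^ 2 := by ring
    _ ≤ _ := add_le_add hξ_term (by
      have := mul_le_mul_of_nonneg_left hJ (by positivity : (0 : ℝ) ≤ 2 * l)
      linarith)

theorem integral_sq_deriv_le_of_nat_mul {v : ℝ → ℝ} (hv : ContDiff ℝ 2 v) (a : ℝ) {l : ℝ}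
    (hl : 0 < l) (N : ℕ) :
    ∫ x in a..a + N * l, deriv v x ^ 2 ≤
      216 / l ^ 2 * (∫ x in a..a + N * l, v x ^ 2) +
        2 * l ^ 2 * ∫ x in a..a + N * l, deriv (deriv v) x ^ 2 := by
  have hsum (f : ℝ → ℝ) (hf : Continuous f) :
      ∑ k ∈ Finset.range N, ∫ x in a + k * l..a + (k + 1 : ℕ) * l, f x =
        ∫ x in a..a + N * l, f x := by
    simpa using intervalIntegral.sum_integral_adjacent_intervals (a := fun k : ℕ => a + k * l)
      (fun k _ => hf.intervalIntegrable _ _)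
  have hv' : ContDiff ℝ 1 (deriv v) := hv.iterate_deriv' 1 1
  rw [← hsum (fun x => deriv v x ^ 2) (hv'.continuous.pow 2),
    ← hsum (fun x => v x ^ 2) (hv.continuous.pow 2),
    ← hsum (fun x => deriv (deriv v) x ^ 2) ((hv'.continuous_deriv le_rfl).pow 2),
    Finset.mul_sum, Finset.mul_sum, ← Finset.sum_add_distrib]
  refine Finset.sum_le_sum fun k _ => ?_
  have hlength : a + (k + 1 : ℕ) * l - (a + k * l) = l := by push_cast; ring
  simpa only [hlength] using
    integral_sq_deriv_le hv (a := a + k * l) (b := a + (k + 1 : ℕ) * l) (by linarith)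

theorem sqrt_le_mul_sqrt_add_mul_sqrt {x y z s t : ℝ} (hy : 0 ≤ y) (hz : 0 ≤ z) (hs : 0 ≤ s)
    (ht : 0 ≤ t) (h : x ≤ s ^ 2 * y + t ^ 2 * z) : √x ≤ s * √y + t * √z := by
  refine Real.sqrt_le_iff.2 ⟨by positivity, h.trans ?_⟩
  nlinarith [Real.sq_sqrt hy, Real.sq_sqrt hz,
    mul_nonneg (mul_nonneg hs ht) (mul_nonneg (Real.sqrt_nonneg y) (Real.sqrt_nonneg z))]

theorem sqrt_integral_sq_deriv_le {v : ℝ → ℝ} (hv : ContDiff ℝ 2 v) {a b ε : ℝ} (hab : a < b)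
    (hε : ε ∈ Ioc 0 1) :
    √(∫ x in Ioo a b, deriv v x ^ 2) ≤
      ε * √(∫ x in Ioo a b, deriv (deriv v) x ^ 2) +
        15 * (2 + 1 / (b - a)) / ε * √(∫ x in Ioo a b, v x ^ 2) := by
  obtain ⟨hε0, hε1⟩ := hε
  set L := b - a
  have hL : 0 < L := sub_pos.2 hab
  set N := ⌈2 * L / ε⌉₊
  have hN : 2 * L / ε ≤ N := Nat.le_ceil _
  have hN' : (N : ℝ) < 2 * L / ε + 1 := Nat.ceil_lt_add_one (by positivity)
  have hN0 : 0 < (N : ℝ) := (by positivity : 0 < 2 * L / ε).trans_le hN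
  have hl : 0 < L / N := by positivity
  have hb : a + N * (L / N) = b := by
    rw [mul_div_cancel₀ _ hN0.ne']; exact add_sub_cancel a b
  have hsub := integral_sq_deriv_le_of_nat_mul hv a hl N
  rw [hb] at hsub
  simp only [intervalIntegral.integral_of_le hab.le, integral_Ioc_eq_integral_Ioo] at hsub
  have hcoeff₂ : 2 * (L / N) ^ 2 ≤ ε ^ 2 := by
    have : L / N ≤ ε / 2 := by
      rw [div_le_iff₀ hN0]; rw [div_le_iff₀ hε0] at hN; linarith
    nlinarith [hl.le]
  have hcoeff₀ : 216 / (L / N) ^ 2 ≤ (15 * (2 + 1 / L) / ε) ^ 2 := by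
    have : N / L ≤ (2 + 1 / L) / ε := by
      rw [div_le_div_iff₀ hL hε0]
      calc N * ε ≤ (2 * L / ε + 1) * ε := by gcongr
        _ = 2 * L + ε := by field_simp
        _ ≤ (2 + 1 / L) * L := by field_simp; linarith
    calc 216 / (L / N) ^ 2 = 216 * (N / L) ^ 2 := by field_simp
      _ ≤ 225 * ((2 + 1 / L) / ε) ^ 2 := by gcongr; norm_num
      _ = (15 * (2 + 1 / L) / ε) ^ 2 := by ring
  refine sqrt_le_mul_sqrt_add_mul_sqrt
    (setIntegral_nonneg measurableSet_Ioo fun _ _ => sq_nonneg _)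
    (setIntegral_nonneg measurableSet_Ioo fun _ _ => sq_nonneg _) hε0.le (by positivity)
    (hsub.trans ?_)
  rw [add_comm]
  gcongr

/-- `b k` plays the role of `‖Dᵏu‖`. -/
def IsInterpolating (C : ℝ) (m : ℕ) (b : ℕ → ℝ) : Prop :=
  ∀ k, k + 2 ≤ m → ∀ ε ∈ Ioc (0 : ℝ) 1, b (k + 1) ≤ ε * b (k + 2) + C / ε * b k

theorem exists_le_mul_succ_add {C : ℝ} (hC : 1 ≤ C) {m k : ℕ} (hk : k < m) :
    ∃ A > 0, ∀ b : ℕ → ℝ, 0 ≤ b → IsInterpolating C m b →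
      ∀ ε ∈ Ioc (0 : ℝ) 1, b k ≤ ε * b (k + 1) + A / ε ^ k * b 0 := by
  induction k with
  | zero =>
    refine ⟨1, one_pos, fun b hb _ ε hε => ?_⟩
    simpa using mul_nonneg hε.1.le (hb 1)
  | succ k ih =>
    obtain ⟨A, hA0, hA⟩ := ih (by omega)
    refine ⟨A * (4 * C) ^ (k + 1), by positivity, fun b hb hinterp ε ⟨hε0, hε1⟩ => ?_⟩
    have hstep := hinterp k hk (ε / 2) ⟨by positivity, by linarith⟩
    have hprev := hA b hb hinterp (ε / (4 * C))
      ⟨by positivity, by rw [div_le_one (by positivity)]; linarith⟩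
    -- the step sizes `ε / 2` and `ε / (4 C)` bring back `b (k + 1)` only with coefficient `1 / 2`
    have hhalf : C / (ε / 2) * b k ≤
        1 / 2 * b (k + 1) + 1 / 2 * (A * (4 * C) ^ (k + 1) / ε ^ (k + 1) * b 0) :=
      calc C / (ε / 2) * b k
          ≤ C / (ε / 2) * (ε / (4 * C) * b (k + 1) + A / (ε / (4 * C)) ^ k * b 0) := by
            gcongr
        _ = 1 / 2 * b (k + 1) + 1 / 2 * (A * (4 * C) ^ (k + 1) / ε ^ (k + 1) * b 0) := by
            rw [div_pow]; field_simp; ring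
    linarith

theorem exists_le_pow_mul_add {C : ℝ} (hC : 1 ≤ C) {m k : ℕ} (hk : k ≤ m) :
    ∃ A > 0, ∀ b : ℕ → ℝ, 0 ≤ b → IsInterpolating C m b →
      ∀ ε ∈ Ioc (0 : ℝ) 1, b k ≤ ε ^ (m - k) * b m + A / ε ^ k * b 0 := by
  induction hk using Nat.decreasingInduction with
  | self =>
    refine ⟨1, one_pos, fun b hb _ ε hε => ?_⟩
    simpa using mul_nonneg (inv_nonneg.2 (pow_nonneg hε.1.le m)) (hb 0)
  | of_succ k hk ih =>
    obtain ⟨A, hA0, hA⟩ := ih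
    obtain ⟨A', hA'0, hA'⟩ := exists_le_mul_succ_add hC hk
    refine ⟨A + A', by positivity, fun b hb hinterp ε hε => ?_⟩
    calc b k ≤ ε * b (k + 1) + A' / ε ^ k * b 0 := hA' b hb hinterp ε hε
      _ ≤ ε * (ε ^ (m - (k + 1)) * b m + A / ε ^ (k + 1) * b 0) + A' / ε ^ k * b 0 := by
        gcongr
        · exact hε.1.le
        · exact hA b hb hinterp ε hε
      _ = ε ^ (m - k) * b m + (A + A') / ε ^ k * b 0 := by
        rw [show m - k = m - (k + 1) + 1 by omega, pow_succ, pow_succ]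
        field_simp [hε.1.ne']
        ring

theorem le_mul_rpow_mul_rpow_add_of_forall_le {x P Q A : ℝ} {i m : ℕ} (hi : i < m) (hP : 0 ≤ P)
    (hQ : 0 ≤ Q) (hA : 0 ≤ A) (h : ∀ ε ∈ Ioc (0 : ℝ) 1, x ≤ ε ^ (m - i) * P + A / ε ^ i * Q) :
    x ≤ (1 + A) * P ^ ((i : ℝ) / m) * Q ^ (1 - (i : ℝ) / m) + A * Q := by
  set θ : ℝ := i / m
  have hm : (0 : ℝ) < m := by exact_mod_cast (Nat.zero_le i).trans_lt hi
  have hθ : θ < 1 := by rw [div_lt_one hm]; exact_mod_cast hi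
  have hG : 0 ≤ P ^ θ * Q ^ (1 - θ) := by positivity
  rcases le_or_gt P Q with hPQ | hQP
  · have h1 := h 1 ⟨one_pos, le_rfl⟩
    simp only [one_pow, one_mul, div_one] at h1
    have hP_le : P ≤ P ^ θ * Q ^ (1 - θ) :=
      calc P = P ^ θ * P ^ (1 - θ) := by rw [← Real.rpow_add' hP (by simp)]; simp
        _ ≤ P ^ θ * Q ^ (1 - θ) := by gcongr
    nlinarith
  rcases hQ.eq_or_lt with rfl | hQ0
  · have hx : x ≤ 0 := by
      have hlim : Tendsto (fun ε : ℝ => ε ^ (m - i) * P) (𝓝[>] 0) (𝓝 0) := by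
        simpa [zero_pow (by omega : m - i ≠ 0)] using
          ((by fun_prop : Continuous fun ε : ℝ => ε ^ (m - i) * P).tendsto 0).mono_left
            nhdsWithin_le_nhds
      exact ge_of_tendsto hlim (eventually_of_mem (Ioc_mem_nhdsGT one_pos) fun ε hε => by
        simpa using h ε hε)
    nlinarith
  · have hP0 : 0 < P := hQ0.trans hQP
    set ε := (Q / P) ^ ((1 : ℝ) / m)
    have hε0 : 0 < ε := by positivity
    have hε1 : ε ≤ 1 :=
      Real.rpow_le_one (by positivity) ((div_le_one hP0).2 hQP.le) (by positivity)
    have hQε : Q = ε ^ m * P := by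
      rw [← Real.rpow_natCast, ← Real.rpow_mul (by positivity), one_div_mul_cancel hm.ne',
        Real.rpow_one, div_mul_cancel₀ _ hP0.ne']
    have hsplit : ε ^ m = ε ^ (m - i) * ε ^ i := by rw [← pow_add, Nat.sub_add_cancel hi.le]
    have hG_eq : P ^ θ * Q ^ (1 - θ) = ε ^ (m - i) * P := by
      have hexp : (m : ℝ) * (1 - θ) = (m - i : ℕ) := by
        rw [Nat.cast_sub hi.le, mul_one_sub, mul_div_cancel₀ _ hm.ne']
      rw [hQε, Real.mul_rpow (by positivity) hP, ← Real.rpow_natCast ε m,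
        ← Real.rpow_mul hε0.le, hexp, Real.rpow_natCast, mul_left_comm,
        ← Real.rpow_add' hP (by simp)]
      simp
    have h1 := h ε ⟨hε0, hε1⟩
    rw [hQε, hsplit, show A / ε ^ i * (ε ^ (m - i) * ε ^ i * P) = A * (ε ^ (m - i) * P) by
      field_simp, ← hG_eq] at h1
    nlinarith

theorem interpolation_intermediate_derivatives_general (L : ℝ) (hL : 0 < L) (m i : ℕ)
    (hi : i < m) :
    ∃ A₁ A₂ : ℝ, 0 < A₁ ∧ 0 < A₂ ∧
      ∀ u : ℝ → ℝ, ContDiff ℝ m u →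
        Real.sqrt (∫ x in Ioo 0 L, (iteratedDeriv i u x) ^ 2) ≤
          A₁ * (Real.sqrt (∫ x in Ioo 0 L, (iteratedDeriv m u x) ^ 2)) ^ ((i : ℝ) / m)
              * (Real.sqrt (∫ x in Ioo 0 L, (u x) ^ 2)) ^ (1 - (i : ℝ) / m)
            + A₂ * Real.sqrt (∫ x in Ioo 0 L, (u x) ^ 2) := by
  have hC : 1 ≤ 15 * (2 + 1 / L) := by
    have : 0 < 1 / L := by positivity
    linarith
  obtain ⟨A, hA0, hA⟩ := exists_le_pow_mul_add hC hi.le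
  refine ⟨1 + A, A, by linarith, hA0, fun u hu => ?_⟩
  have hinterp : IsInterpolating (15 * (2 + 1 / L)) m
      fun k => √(∫ x in Ioo 0 L, iteratedDeriv k u x ^ 2) := by
    intro k hk ε hε
    have hv : ContDiff ℝ 2 (iteratedDeriv k u) := by
      rw [iteratedDeriv_eq_iterate]
      exact (hu.of_le (by exact_mod_cast (by omega : 2 + k ≤ m))).iterate_deriv' 2 k
    simpa [iteratedDeriv_succ] using sqrt_integral_sq_deriv_le hv hL hε
  simpa using le_mul_rpow_mul_rpow_add_of_forall_le hi (Real.sqrt_nonneg _)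
    (Real.sqrt_nonneg _) hA0.le (hA _ (fun _ => Real.sqrt_nonneg _) hinterp)

/-- Gagliardo–Nirenberg interpolation of intermediate derivatives on `(0,L)`:
`‖Dⁱu‖ ≤ A₁ ‖Dᵐu‖^{i/m} ‖u‖^{1-i/m} + A₂ ‖u‖`, with `A₁, A₂` depending only on
`L`, `m`, `i`. -/
theorem interpolation_intermediate_derivatives (L : ℝ) (hL : 0 < L) (m i : ℕ)
    (hm : 0 < m) (hi : i < m) :
    ∃ A₁ A₂ : ℝ, 0 < A₁ ∧ 0 < A₂ ∧
      ∀ u : ℝ → ℝ, ContDiff ℝ m u →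
        Real.sqrt (∫ x in Ioo 0 L, (iteratedDeriv i u x) ^ 2) ≤
          A₁ * (Real.sqrt (∫ x in Ioo 0 L, (iteratedDeriv m u x) ^ 2)) ^ ((i : ℝ) / m)
              * (Real.sqrt (∫ x in Ioo 0 L, (u x) ^ 2)) ^ (1 - (i : ℝ) / m)
            + A₂ * Real.sqrt (∫ x in Ioo 0 L, (u x) ^ 2) :=
  interpolation_intermediate_derivatives_general L hL m i hi
end

section
/- Let D = (0,L)×(0,B), f ∈ H⁴(D) ∩ H^1_0(D) satisfying the boundary conditions f|_{∂D} = f_{yy}(x,0) = f_{yy}(x,B) = f_x(0,y) = f_x(L,y) = f_{xx}(L,y) = 0, and let a = π²/L² + π²/B². Then a²‖Δf‖²_{L²(D)} ≤ ‖Δ²f‖²_{L²(D)}. -/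
/-!
Write `⟪g, h⟫` for the L² pairing on the rectangle. Integrating by parts twice in each variable,
the boundary conditions make every boundary term vanish, so `⟪f, Δ²f⟫ = ‖Δf‖²` and
`⟪f, Δf⟫ = -‖∇f‖²`. The sharp one-dimensional Wirtinger inequality in each variable gives
`a ‖f‖² ≤ ‖∇f‖²`. By Cauchy–Schwarz, `a ‖f‖² ≤ ‖f‖ ‖Δf‖` and `‖Δf‖² ≤ ‖f‖ ‖Δ²f‖`, and eliminating
`‖f‖` leaves `a ‖Δf‖ ≤ ‖Δ²f‖`.

Wirtinger's inequality `(π / c)² ∫₀ᶜ u² ≤ ∫₀ᶜ u'²` for `u(0) = u(c) = 0` follows from Picone's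
identity `u'² - k² u² = (u' - k u cot kx)² + (k u² cot kx)'` with `k = π / c`: the function
`∫₀ˣ (u'² - k² u²) - k u² cot kx` is nondecreasing on `[0, c]`, and its last term tends to `0`
at both ends because `u` and `sin kx` vanish there to first order.
-/

open MeasureTheory Set

/-- The Laplacian of a curried function of two real variables. -/
noncomputable def lap (u : ℝ → ℝ → ℝ) : ℝ → ℝ → ℝ :=
  fun x y => iteratedDeriv 2 (fun s => u s y) x + iteratedDeriv 2 (u x) y

open Function Filter Topology Real

lemma integral_Ioo_mul_deriv {u v : ℝ → ℝ} {a b : ℝ} (hu : ContDiff ℝ 1 u) (hv : ContDiff ℝ 1 v)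
    (hab : a ≤ b) (huv : u b * v b = u a * v a) :
    ∫ x in Ioo a b, u x * deriv v x = -∫ x in Ioo a b, deriv u x * v x := by
  rw [← integral_Ioc_eq_integral_Ioo, ← integral_Ioc_eq_integral_Ioo,
    ← intervalIntegral.integral_of_le hab, ← intervalIntegral.integral_of_le hab,
    intervalIntegral.integral_mul_deriv_eq_deriv_mul
      (fun x _ => (hu.differentiable one_ne_zero x).hasDerivAt)
      (fun x _ => (hv.differentiable one_ne_zero x).hasDerivAt)
      ((hu.continuous_deriv le_rfl).intervalIntegrable _ _)
      ((hv.continuous_deriv le_rfl).intervalIntegrable _ _), huv, sub_self, zero_sub]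

lemma sq_integral_mul_le {α : Type*} [MeasurableSpace α] {μ : Measure α} {f g : α → ℝ}
    (hf : Integrable (fun x => f x ^ 2) μ) (hg : Integrable (fun x => g x ^ 2) μ)
    (hfg : Integrable (fun x => f x * g x) μ) :
    (∫ x, f x * g x ∂μ) ^ 2 ≤ (∫ x, f x ^ 2 ∂μ) * ∫ x, g x ^ 2 ∂μ := by
  have hquad : ∀ t : ℝ, 0 ≤ (∫ x, f x ^ 2 ∂μ) * (t * t) + (2 * ∫ x, f x * g x ∂μ) * t
      + ∫ x, g x ^ 2 ∂μ := fun t => by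
    have hint : Integrable (fun x => t * t * f x ^ 2 + 2 * t * (f x * g x)) μ :=
      (hf.const_mul _).add (hfg.const_mul _)
    have h : ∫ x, (t * f x + g x) ^ 2 ∂μ
        = ∫ x, t * t * f x ^ 2 + 2 * t * (f x * g x) + g x ^ 2 ∂μ :=
      integral_congr_ae (ae_of_all _ fun x => by ring)
    rw [integral_add hint hg, integral_add (hf.const_mul _) (hfg.const_mul _),
      integral_const_mul, integral_const_mul] at h
    have h0 : 0 ≤ ∫ x, (t * f x + g x) ^ 2 ∂μ := integral_nonneg fun x => sq_nonneg _
    linarith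
  have h := discrim_le_zero hquad
  rw [discrim] at h
  nlinarith

lemma continuousAt_sq_div_of_hasDerivAt {u s : ℝ → ℝ} {u' s' x₀ : ℝ} (hu : HasDerivAt u u' x₀)
    (hs : HasDerivAt s s' x₀) (hu₀ : u x₀ = 0) (hs₀ : s x₀ = 0) (hs' : s' ≠ 0) :
    ContinuousAt (fun x => u x ^ 2 / s x) x₀ := by
  rw [← continuousWithinAt_compl_self, ContinuousWithinAt, hu₀, hs₀, zero_pow two_ne_zero,
    zero_div]
  have hlim : Tendsto (fun x => slope u x₀ x ^ 2 * (x - x₀) / slope s x₀ x) (𝓝[≠] x₀)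
      (𝓝 (u' ^ 2 * 0 / s')) := by
    refine (((hasDerivAt_iff_tendsto_slope.mp hu).pow 2).mul ?_).div
      (hasDerivAt_iff_tendsto_slope.mp hs) hs'
    exact tendsto_nhdsWithin_of_tendsto_nhds (by simpa using (continuous_sub_right x₀).tendsto x₀)
  rw [mul_zero, zero_div] at hlim
  refine hlim.congr' (eventually_nhdsWithin_of_forall fun x hx => ?_)
  have hx : x - x₀ ≠ 0 := sub_ne_zero.mpr hx
  rcases eq_or_ne (s x) 0 with h | h
  · simp [slope_def_field, h, hs₀]
  · rw [slope_def_field, slope_def_field, hu₀, hs₀, sub_zero, sub_zero]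
    field_simp

lemma hasDerivAt_picone {u : ℝ → ℝ} {u' k x : ℝ} (hu : HasDerivAt u u' x)
    (hx : sin (k * x) ≠ 0) :
    HasDerivAt (fun x => k * cos (k * x) * (u x ^ 2 / sin (k * x)))
      (u' ^ 2 - k ^ 2 * u x ^ 2 - (u' - k * cos (k * x) * u x / sin (k * x)) ^ 2) x := by
  have hkx : HasDerivAt (fun x => k * x) k x := by simpa using (hasDerivAt_id x).const_mul k
  refine ((((hasDerivAt_cos (k * x)).comp x hkx).const_mul k).mul
    ((hu.pow 2).div ((hasDerivAt_sin (k * x)).comp x hkx) hx)).congr_deriv ?_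
  simp only [comp_apply, Pi.pow_apply, Pi.div_apply, Nat.cast_ofNat, Nat.add_one_sub_one, pow_one]
  field_simp
  ring

theorem pi_div_sq_mul_integral_sq_le_integral_sq_deriv {u : ℝ → ℝ} {c : ℝ} (hc : 0 < c)
    (hu : ContDiff ℝ 1 u) (hu₀ : u 0 = 0) (hu_c : u c = 0) :
    (π / c) ^ 2 * ∫ x in 0..c, u x ^ 2 ≤ ∫ x in 0..c, deriv u x ^ 2 := by
  set k := π / c
  have hkc : k * c = π := div_mul_cancel₀ π hc.ne'
  have hu' : ∀ x, HasDerivAt u (deriv u x) x :=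
    fun x => (hu.differentiable one_ne_zero x).hasDerivAt
  have hk : 0 < k := by positivity
  have hsin : ∀ x, HasDerivAt (fun x => sin (k * x)) (k * cos (k * x)) x := fun x =>
    (((hasDerivAt_id' x).const_mul k).sin).congr_deriv (by ring)
  have hG : Continuous fun x => deriv u x ^ 2 - k ^ 2 * u x ^ 2 :=
    ((hu.continuous_deriv le_rfl).pow 2).sub (continuous_const.mul (hu.continuous.pow 2))
  -- At `0` and `c` the quotient in `W` is `0 / 0 = 0`, which is also its limit there.
  set W : ℝ → ℝ := fun x => k * cos (k * x) * (u x ^ 2 / sin (k * x))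
  have hW : ContinuousOn W (Icc 0 c) := by
    intro x hx
    refine ContinuousAt.continuousWithinAt ?_
    rcases eq_endpoints_or_mem_Ioo_of_mem_Icc hx with rfl | rfl | ⟨hx₀, hxc⟩
    · refine continuousAt_const.mul (continuous_cos.comp (continuous_const_mul k)).continuousAt
        |>.mul (continuousAt_sq_div_of_hasDerivAt (hu' 0) (hsin 0) hu₀ (by simp) ?_)
      simpa using hk.ne'
    · refine continuousAt_const.mul (continuous_cos.comp (continuous_const_mul k)).continuousAt
        |>.mul (continuousAt_sq_div_of_hasDerivAt (hu' _) (hsin _) hu_c (by simp [hkc]) ?_)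
      simpa [hkc] using hk.ne'
    · exact (hasDerivAt_picone (hu' x) (sin_pos_of_pos_of_lt_pi (by positivity)
        (hkc ▸ mul_lt_mul_of_pos_left hxc hk)).ne').continuousAt
  have hmono : MonotoneOn (fun x => (∫ t in 0..x, deriv u t ^ 2 - k ^ 2 * u t ^ 2) - W x)
      (Icc 0 c) := by
    refine monotoneOn_of_hasDerivWithinAt_nonneg (convex_Icc 0 c)
      (f' := fun x => (deriv u x - k * cos (k * x) * u x / sin (k * x)) ^ 2)
      ((intervalIntegral.continuous_primitive (fun _ _ => hG.intervalIntegrable _ _)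
        0).continuousOn.sub hW)
      (fun x hx => ?_) fun x _ => sq_nonneg _
    rw [interior_Icc] at hx
    have hsx : sin (k * x) ≠ 0 := (sin_pos_of_pos_of_lt_pi (mul_pos hk hx.1)
      (hkc ▸ mul_lt_mul_of_pos_left hx.2 hk)).ne'
    exact (((hG.integral_hasStrictDerivAt 0 x).hasDerivAt.sub
      (hasDerivAt_picone (hu' x) hsx)).congr_deriv (by ring)).hasDerivWithinAt
  have hW₀ : W 0 = 0 := by simp [W, hu₀]
  have hW_c : W c = 0 := by simp [W, hu_c]
  have := hmono (left_mem_Icc.mpr hc.le) (right_mem_Icc.mpr hc.le) hc.le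
  simp only [intervalIntegral.integral_same, hW₀, hW_c, sub_zero] at this
  rw [intervalIntegral.integral_sub, intervalIntegral.integral_const_mul] at this
  · linarith
  · exact ((hu.continuous_deriv le_rfl).pow 2).intervalIntegrable _ _
  · exact (continuous_const.mul (hu.continuous.pow 2)).intervalIntegrable _ _

noncomputable def partialX (u : ℝ → ℝ → ℝ) : ℝ → ℝ → ℝ := fun x y => deriv (fun s => u s y) x

noncomputable def partialY (u : ℝ → ℝ → ℝ) : ℝ → ℝ → ℝ := fun x y => deriv (u x) y

-- `partialX u` is definitionally `flip (partialY (flip u))`: the statements in `x` below are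
-- the statements in `y` for `flip u`, transported by swapping the coordinates.

lemma lap_apply (u : ℝ → ℝ → ℝ) (x y : ℝ) :
    lap u x y = partialX (partialX u) x y + partialY (partialY u) x y := by
  simp only [lap, iteratedDeriv_succ, iteratedDeriv_zero]
  rfl

lemma contDiff_uncurry_flip {n : WithTop ℕ∞} {u : ℝ → ℝ → ℝ} (hu : ContDiff ℝ n (uncurry u)) :
    ContDiff ℝ n (uncurry (flip u)) :=
  hu.comp (contDiff_snd.prodMk contDiff_fst)

lemma contDiff_partialY {m n : WithTop ℕ∞} {u : ℝ → ℝ → ℝ} (hu : ContDiff ℝ n (uncurry u))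
    (hmn : m + 1 ≤ n) : ContDiff ℝ m (uncurry (partialY u)) := by
  have hd : Differentiable ℝ (uncurry u) :=
    (hu.of_le (le_trans le_add_self hmn)).differentiable one_ne_zero
  have h : uncurry (partialY u) = fun p => fderiv ℝ (uncurry u) p (0, 1) := funext fun p =>
    ((hd (p.1, p.2)).hasFDerivAt.comp_hasDerivAt p.2
      ((hasDerivAt_const p.2 p.1).prodMk (hasDerivAt_id' p.2))).deriv
  rw [h]
  exact (hu.fderiv_right hmn).clm_apply contDiff_const

lemma contDiff_partialX {m n : WithTop ℕ∞} {u : ℝ → ℝ → ℝ} (hu : ContDiff ℝ n (uncurry u))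
    (hmn : m + 1 ≤ n) : ContDiff ℝ m (uncurry (partialX u)) :=
  contDiff_uncurry_flip (contDiff_partialY (contDiff_uncurry_flip hu) hmn)

lemma contDiff_partialX_partialX {m n : WithTop ℕ∞} {u : ℝ → ℝ → ℝ}
    (hu : ContDiff ℝ n (uncurry u)) (hmn : m + 2 ≤ n) :
    ContDiff ℝ m (uncurry (partialX (partialX u))) :=
  contDiff_partialX (contDiff_partialX hu (by rwa [add_assoc, one_add_one_eq_two])) le_rfl

lemma contDiff_partialY_partialY {m n : WithTop ℕ∞} {u : ℝ → ℝ → ℝ}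
    (hu : ContDiff ℝ n (uncurry u)) (hmn : m + 2 ≤ n) :
    ContDiff ℝ m (uncurry (partialY (partialY u))) :=
  contDiff_partialY (contDiff_partialY hu (by rwa [add_assoc, one_add_one_eq_two])) le_rfl

lemma contDiff_lap {m n : WithTop ℕ∞} {u : ℝ → ℝ → ℝ} (hu : ContDiff ℝ n (uncurry u))
    (hmn : m + 2 ≤ n) : ContDiff ℝ m (uncurry (lap u)) := by
  have h : uncurry (lap u) = uncurry (partialX (partialX u)) + uncurry (partialY (partialY u)) :=
    funext fun p => lap_apply u p.1 p.2
  rw [h]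
  exact (contDiff_partialX_partialX hu hmn).add (contDiff_partialY_partialY hu hmn)

section Rectangle

variable {a b c d : ℝ}

lemma integrableOn_Ioo_prod_Ioo {F : ℝ × ℝ → ℝ} (hF : Continuous F) :
    IntegrableOn F (Ioo a b ×ˢ Ioo c d) :=
  (hF.continuousOn.integrableOn_compact (isCompact_Icc.prod isCompact_Icc)).mono_set
    (prod_mono Ioo_subset_Icc_self Ioo_subset_Icc_self)

lemma setIntegral_Ioo_prod_Ioo_add {F G : ℝ × ℝ → ℝ} (hF : Continuous F) (hG : Continuous G) :
    ∫ p in Ioo a b ×ˢ Ioo c d, (F p + G p)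
      = (∫ p in Ioo a b ×ˢ Ioo c d, F p) + ∫ p in Ioo a b ×ˢ Ioo c d, G p :=
  integral_add (integrableOn_Ioo_prod_Ioo hF) (integrableOn_Ioo_prod_Ioo hG)

lemma setIntegral_Ioo_prod_Ioo_eq_iterated {F : ℝ × ℝ → ℝ} (hF : Continuous F) :
    ∫ p in Ioo a b ×ˢ Ioo c d, F p = ∫ x in Ioo a b, ∫ y in Ioo c d, F (x, y) := by
  rw [Measure.volume_eq_prod]
  exact setIntegral_prod _ (by rw [← Measure.volume_eq_prod]; exact integrableOn_Ioo_prod_Ioo hF)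

lemma setIntegral_Ioo_prod_Ioo_swap (F : ℝ × ℝ → ℝ) :
    ∫ p in Ioo a b ×ˢ Ioo c d, F p = ∫ p in Ioo c d ×ˢ Ioo a b, F p.swap := by
  rw [Measure.volume_eq_prod, setIntegral_prod_swap]

lemma setIntegral_mul_partialY {u v : ℝ → ℝ → ℝ} (hu : ContDiff ℝ 1 (uncurry u))
    (hv : ContDiff ℝ 1 (uncurry v)) (hcd : c ≤ d) (huv : ∀ x, u x d * v x d = u x c * v x c) :
    ∫ p in Ioo a b ×ˢ Ioo c d, u p.1 p.2 * partialY v p.1 p.2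
      = -∫ p in Ioo a b ×ˢ Ioo c d, partialY u p.1 p.2 * v p.1 p.2 := by
  have hl : Continuous fun p : ℝ × ℝ => u p.1 p.2 * partialY v p.1 p.2 :=
    hu.continuous.mul (contDiff_partialY (m := 0) hv (by simp)).continuous
  have hr : Continuous fun p : ℝ × ℝ => partialY u p.1 p.2 * v p.1 p.2 :=
    (contDiff_partialY (m := 0) hu (by simp)).continuous.mul hv.continuous
  rw [setIntegral_Ioo_prod_Ioo_eq_iterated hl, setIntegral_Ioo_prod_Ioo_eq_iterated hr,
    ← integral_neg]
  refine setIntegral_congr_fun measurableSet_Ioo fun x _ => ?_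
  exact integral_Ioo_mul_deriv (hu.comp (contDiff_prodMk_right x))
    (hv.comp (contDiff_prodMk_right x)) hcd (huv x)

lemma setIntegral_mul_partialX {u v : ℝ → ℝ → ℝ} (hu : ContDiff ℝ 1 (uncurry u))
    (hv : ContDiff ℝ 1 (uncurry v)) (hab : a ≤ b) (huv : ∀ y, u b y * v b y = u a y * v a y) :
    ∫ p in Ioo a b ×ˢ Ioo c d, u p.1 p.2 * partialX v p.1 p.2
      = -∫ p in Ioo a b ×ˢ Ioo c d, partialX u p.1 p.2 * v p.1 p.2 := by
  rw [setIntegral_Ioo_prod_Ioo_swap,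
    setIntegral_Ioo_prod_Ioo_swap (fun p => partialX u p.1 p.2 * v p.1 p.2)]
  exact setIntegral_mul_partialY (contDiff_uncurry_flip hu) (contDiff_uncurry_flip hv) hab huv

lemma setIntegral_mul_partialY_partialY {u v : ℝ → ℝ → ℝ} (hu : ContDiff ℝ 2 (uncurry u))
    (hv : ContDiff ℝ 2 (uncurry v)) (hcd : c ≤ d)
    (hu_bd : ∀ x, u x d * partialY v x d = u x c * partialY v x c)
    (hv_bd : ∀ x, v x d * partialY u x d = v x c * partialY u x c) :
    ∫ p in Ioo a b ×ˢ Ioo c d, u p.1 p.2 * partialY (partialY v) p.1 p.2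
      = ∫ p in Ioo a b ×ˢ Ioo c d, partialY (partialY u) p.1 p.2 * v p.1 p.2 := by
  calc _ = -∫ p in Ioo a b ×ˢ Ioo c d, partialY u p.1 p.2 * partialY v p.1 p.2 :=
        setIntegral_mul_partialY (hu.of_le one_le_two) (contDiff_partialY hv (by norm_num)) hcd
          hu_bd
    _ = -∫ p in Ioo a b ×ˢ Ioo c d, partialY v p.1 p.2 * partialY u p.1 p.2 := by
        simp only [mul_comm]
    _ = ∫ p in Ioo a b ×ˢ Ioo c d, v p.1 p.2 * partialY (partialY u) p.1 p.2 :=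
        (setIntegral_mul_partialY (hv.of_le one_le_two) (contDiff_partialY hu (by norm_num)) hcd
          hv_bd).symm
    _ = _ := by simp only [mul_comm]

lemma setIntegral_mul_partialX_partialX {u v : ℝ → ℝ → ℝ} (hu : ContDiff ℝ 2 (uncurry u))
    (hv : ContDiff ℝ 2 (uncurry v)) (hab : a ≤ b)
    (hu_bd : ∀ y, u b y * partialX v b y = u a y * partialX v a y)
    (hv_bd : ∀ y, v b y * partialX u b y = v a y * partialX u a y) :
    ∫ p in Ioo a b ×ˢ Ioo c d, u p.1 p.2 * partialX (partialX v) p.1 p.2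
      = ∫ p in Ioo a b ×ˢ Ioo c d, partialX (partialX u) p.1 p.2 * v p.1 p.2 := by
  rw [setIntegral_Ioo_prod_Ioo_swap,
    setIntegral_Ioo_prod_Ioo_swap (fun p => partialX (partialX u) p.1 p.2 * v p.1 p.2)]
  exact setIntegral_mul_partialY_partialY (contDiff_uncurry_flip hu) (contDiff_uncurry_flip hv)
    hab hu_bd hv_bd

lemma setIntegral_mul_lap {u v : ℝ → ℝ → ℝ} (hu : ContDiff ℝ 1 (uncurry u))
    (hv : ContDiff ℝ 2 (uncurry v)) (hab : a ≤ b) (hcd : c ≤ d)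
    (hu_x : ∀ y, u a y = 0 ∧ u b y = 0) (hu_y : ∀ x, u x c = 0 ∧ u x d = 0) :
    ∫ p in Ioo a b ×ˢ Ioo c d, u p.1 p.2 * lap v p.1 p.2
      = -((∫ p in Ioo a b ×ˢ Ioo c d, partialX u p.1 p.2 * partialX v p.1 p.2)
        + ∫ p in Ioo a b ×ˢ Ioo c d, partialY u p.1 p.2 * partialY v p.1 p.2) := by
  have hxx : Continuous fun p : ℝ × ℝ => u p.1 p.2 * partialX (partialX v) p.1 p.2 :=
    hu.continuous.mul (contDiff_partialX_partialX (m := 0) hv (by simp)).continuous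
  have hyy : Continuous fun p : ℝ × ℝ => u p.1 p.2 * partialY (partialY v) p.1 p.2 :=
    hu.continuous.mul (contDiff_partialY_partialY (m := 0) hv (by simp)).continuous
  simp only [lap_apply, mul_add]
  rw [setIntegral_Ioo_prod_Ioo_add hxx hyy,
    setIntegral_mul_partialX hu (contDiff_partialX hv (by norm_num)) hab
      fun y => by simp [hu_x y],
    setIntegral_mul_partialY hu (contDiff_partialY hv (by norm_num)) hcd
      fun x => by simp [hu_y x], neg_add]

lemma setIntegral_mul_lap_comm {u v : ℝ → ℝ → ℝ} (hu : ContDiff ℝ 2 (uncurry u))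
    (hv : ContDiff ℝ 2 (uncurry v)) (hab : a ≤ b) (hcd : c ≤ d)
    (hu_x : ∀ y, u b y * partialX v b y = u a y * partialX v a y)
    (hv_x : ∀ y, v b y * partialX u b y = v a y * partialX u a y)
    (hu_y : ∀ x, u x d * partialY v x d = u x c * partialY v x c)
    (hv_y : ∀ x, v x d * partialY u x d = v x c * partialY u x c) :
    ∫ p in Ioo a b ×ˢ Ioo c d, u p.1 p.2 * lap v p.1 p.2
      = ∫ p in Ioo a b ×ˢ Ioo c d, lap u p.1 p.2 * v p.1 p.2 := by
  have hxx : Continuous fun p : ℝ × ℝ => partialX (partialX u) p.1 p.2 * v p.1 p.2 :=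
    (contDiff_partialX_partialX (m := 0) hu (by simp)).continuous.mul hv.continuous
  have hyy : Continuous fun p : ℝ × ℝ => partialY (partialY u) p.1 p.2 * v p.1 p.2 :=
    (contDiff_partialY_partialY (m := 0) hu (by simp)).continuous.mul hv.continuous
  have hxx' : Continuous fun p : ℝ × ℝ => u p.1 p.2 * partialX (partialX v) p.1 p.2 :=
    hu.continuous.mul (contDiff_partialX_partialX (m := 0) hv (by simp)).continuous
  have hyy' : Continuous fun p : ℝ × ℝ => u p.1 p.2 * partialY (partialY v) p.1 p.2 :=
    hu.continuous.mul (contDiff_partialY_partialY (m := 0) hv (by simp)).continuous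
  simp only [lap_apply, mul_add, add_mul]
  rw [setIntegral_Ioo_prod_Ioo_add hxx' hyy', setIntegral_Ioo_prod_Ioo_add hxx hyy,
    setIntegral_mul_partialX_partialX hu hv hab hu_x hv_x,
    setIntegral_mul_partialY_partialY hu hv hcd hu_y hv_y]

lemma pi_div_sq_mul_setIntegral_sq_le_partialY {u : ℝ → ℝ → ℝ} (hd : 0 < d)
    (hu : ContDiff ℝ 1 (uncurry u)) (hu_bd : ∀ x, u x 0 = 0 ∧ u x d = 0) :
    (π / d) ^ 2 * ∫ p in Ioo a b ×ˢ Ioo 0 d, u p.1 p.2 ^ 2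
      ≤ ∫ p in Ioo a b ×ˢ Ioo 0 d, partialY u p.1 p.2 ^ 2 := by
  have hu' : Continuous fun p : ℝ × ℝ => partialY u p.1 p.2 ^ 2 :=
    (contDiff_partialY (m := 0) hu (by simp)).continuous.pow 2
  have hu₂ : Continuous fun p : ℝ × ℝ => (π / d) ^ 2 * u p.1 p.2 ^ 2 :=
    continuous_const.mul (hu.continuous.pow 2)
  have hG : Continuous fun p : ℝ × ℝ => partialY u p.1 p.2 ^ 2 - (π / d) ^ 2 * u p.1 p.2 ^ 2 :=
    hu'.sub hu₂
  rw [← sub_nonneg, ← integral_const_mul,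
    ← integral_sub (integrableOn_Ioo_prod_Ioo hu') (integrableOn_Ioo_prod_Ioo hu₂),
    setIntegral_Ioo_prod_Ioo_eq_iterated hG]
  refine setIntegral_nonneg measurableSet_Ioo fun x _ => ?_
  have hux : ContDiff ℝ 1 (u x) := hu.comp (contDiff_prodMk_right x)
  have h := pi_div_sq_mul_integral_sq_le_integral_sq_deriv hd hux (hu_bd x).1 (hu_bd x).2
  rw [← intervalIntegral.integral_const_mul, ← sub_nonneg, ← intervalIntegral.integral_sub,
    intervalIntegral.integral_of_le hd.le, integral_Ioc_eq_integral_Ioo] at h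
  · exact h
  · exact ((hux.continuous_deriv le_rfl).pow 2).intervalIntegrable _ _
  · exact (continuous_const.mul (hux.continuous.pow 2)).intervalIntegrable _ _

lemma pi_div_sq_mul_setIntegral_sq_le_partialX {u : ℝ → ℝ → ℝ} (hb : 0 < b)
    (hu : ContDiff ℝ 1 (uncurry u)) (hu_bd : ∀ y, u 0 y = 0 ∧ u b y = 0) :
    (π / b) ^ 2 * ∫ p in Ioo 0 b ×ˢ Ioo c d, u p.1 p.2 ^ 2
      ≤ ∫ p in Ioo 0 b ×ˢ Ioo c d, partialX u p.1 p.2 ^ 2 := by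
  rw [setIntegral_Ioo_prod_Ioo_swap,
    setIntegral_Ioo_prod_Ioo_swap (fun p => partialX u p.1 p.2 ^ 2)]
  exact pi_div_sq_mul_setIntegral_sq_le_partialY hb (contDiff_uncurry_flip hu) hu_bd

lemma sq_setIntegral_Ioo_prod_Ioo_mul_le {u v : ℝ → ℝ → ℝ} (hu : Continuous (uncurry u))
    (hv : Continuous (uncurry v)) :
    (∫ p in Ioo a b ×ˢ Ioo c d, u p.1 p.2 * v p.1 p.2) ^ 2
      ≤ (∫ p in Ioo a b ×ˢ Ioo c d, u p.1 p.2 ^ 2) * ∫ p in Ioo a b ×ˢ Ioo c d, v p.1 p.2 ^ 2 :=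
  sq_integral_mul_le (integrableOn_Ioo_prod_Ioo (hu.pow 2)) (integrableOn_Ioo_prod_Ioo (hv.pow 2))
    (integrableOn_Ioo_prod_Ioo (hu.mul hv))

end Rectangle

lemma sq_mul_le_of_mul_le_of_sq_le_mul {a F N P Q : ℝ} (ha : 0 ≤ a) (hF : 0 ≤ F) (hQ : 0 ≤ Q)
    (haN : a * F ≤ N) (hN : N ^ 2 ≤ F * P) (hP : P ^ 2 ≤ F * Q) : a ^ 2 * P ≤ Q := by
  rcases hF.eq_or_lt with rfl | hF
  · obtain rfl : P = 0 :=
      pow_eq_zero_iff two_ne_zero |>.mp (le_antisymm (by simpa using hP) (sq_nonneg P))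
    simpa using hQ
  · have haP : a ^ 2 * F ≤ P := by nlinarith [mul_nonneg ha hF.le]
    nlinarith [mul_le_mul_of_nonneg_right haP (by nlinarith : 0 ≤ P)]

theorem bilaplacian_poincare_rectangle_general (L B : ℝ) (hL : 0 < L) (hB : 0 < B)
    (f : ℝ → ℝ → ℝ) (hf : ContDiff ℝ 4 (Function.uncurry f))
    (hbx : ∀ y, f 0 y = 0 ∧ f L y = 0)
    (hby : ∀ x, f x 0 = 0 ∧ f x B = 0)
    (hyy : ∀ x, iteratedDeriv 2 (f x) 0 = 0 ∧ iteratedDeriv 2 (f x) B = 0)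
    (hx : ∀ y, deriv (fun x => f x y) 0 = 0 ∧ deriv (fun x => f x y) L = 0)
    (a : ℝ) (ha : a = Real.pi ^ 2 / L ^ 2 + Real.pi ^ 2 / B ^ 2) :
    a ^ 2 * (∫ p in Ioo 0 L ×ˢ Ioo 0 B, (lap f p.1 p.2) ^ 2) ≤
      ∫ p in Ioo 0 L ×ˢ Ioo 0 B, (lap (lap f) p.1 p.2) ^ 2 := by
  have hf₁ : ContDiff ℝ 1 (uncurry f) := hf.of_le (by norm_num)
  have hf₂ : ContDiff ℝ 2 (uncurry f) := hf.of_le (by norm_num)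
  have hΔf : ContDiff ℝ 2 (uncurry (lap f)) := contDiff_lap hf (by norm_num)
  have hΔΔf : Continuous (uncurry (lap (lap f))) :=
    (contDiff_lap (m := 0) hΔf (by simp)).continuous
  have hΔf_bd : ∀ x, lap f x 0 = 0 ∧ lap f x B = 0 := fun x => by
    simp [lap, hyy x, show (fun s => f s 0) = 0 from funext fun s => (hby s).1,
      show (fun s => f s B) = 0 from funext fun s => (hby s).2]
  have hgreen₁ := setIntegral_mul_lap hf₁ hf₂ hL.le hB.le hbx hby
  have hgreen₂ : ∫ p in Ioo 0 L ×ˢ Ioo 0 B, f p.1 p.2 * lap (lap f) p.1 p.2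
      = ∫ p in Ioo 0 L ×ˢ Ioo 0 B, lap f p.1 p.2 ^ 2 := by
    simpa only [sq] using setIntegral_mul_lap_comm hf₂ hΔf hL.le hB.le
      (fun y => by simp [hbx y]) (fun y => by simp [partialX, hx y])
      (fun x => by simp [hby x]) (fun x => by simp [hΔf_bd x])
  have hcs₁ := sq_setIntegral_Ioo_prod_Ioo_mul_le (a := 0) (b := L) (c := 0) (d := B)
    hf.continuous hΔf.continuous
  have hcs₂ := sq_setIntegral_Ioo_prod_Ioo_mul_le (a := 0) (b := L) (c := 0) (d := B)
    hf.continuous hΔΔf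
  simp only [← sq] at hgreen₁
  rw [hgreen₁, neg_sq] at hcs₁
  rw [hgreen₂] at hcs₂
  refine sq_mul_le_of_mul_le_of_sq_le_mul (by rw [ha]; positivity)
    (integral_nonneg fun _ => sq_nonneg _) (integral_nonneg fun _ => sq_nonneg _) ?_ hcs₁ hcs₂
  rw [ha, add_mul, ← div_pow, ← div_pow]
  exact add_le_add (pi_div_sq_mul_setIntegral_sq_le_partialX hL hf₁ hbx)
    (pi_div_sq_mul_setIntegral_sq_le_partialY hB hf₁ hby)

/-- Bilaplacian Poincaré inequality on the rectangle `D = (0,L)×(0,B)`: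
for `f ∈ H⁴(D) ∩ H¹₀(D)` satisfying the boundary conditions
`f|_{∂D} = f_yy(x,0) = f_yy(x,B) = f_x(0,y) = f_x(L,y) = f_xx(L,y) = 0`,
one has `a² ‖Δf‖² ≤ ‖Δ²f‖²` with `a = π²/L² + π²/B²`. -/
theorem bilaplacian_poincare_rectangle (L B : ℝ) (hL : 0 < L) (hB : 0 < B)
    (f : ℝ → ℝ → ℝ) (hf : ContDiff ℝ 4 (Function.uncurry f))
    (hbx : ∀ y, f 0 y = 0 ∧ f L y = 0)
    (hby : ∀ x, f x 0 = 0 ∧ f x B = 0)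
    (hyy : ∀ x, iteratedDeriv 2 (f x) 0 = 0 ∧ iteratedDeriv 2 (f x) B = 0)
    (hx : ∀ y, deriv (fun x => f x y) 0 = 0 ∧ deriv (fun x => f x y) L = 0)
    (hxx : ∀ y, iteratedDeriv 2 (fun x => f x y) L = 0)
    (a : ℝ) (ha : a = Real.pi ^ 2 / L ^ 2 + Real.pi ^ 2 / B ^ 2) :
    a ^ 2 * (∫ p in Ioo 0 L ×ˢ Ioo 0 B, (lap f p.1 p.2) ^ 2) ≤
      ∫ p in Ioo 0 L ×ˢ Ioo 0 B, (lap (lap f) p.1 p.2) ^ 2 :=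
  bilaplacian_poincare_rectangle_general L B hL hB f hf hbx hby hyy hx a ha
end

section
/- Let D = (0,L)×(0,B) and u ∈ H²(D) ∩ H^1_0(D). Then sup_D u² ≤ ‖u_{xy}‖²_{L²(D)} + ‖∇u‖²_{L²(D)} + ‖u‖²_{L²(D)}. -/
/-!
Since `u` vanishes on the axes `x = 0` and `y = 0`, two applications of the fundamental theorem
of calculus give `u(x, y)² = ∫₀ˣ ∫₀ʸ ∂_y ∂_x (u²)`, and
`∂_y ∂_x (u²) = 2 (u_x u_y + u u_xy) ≤ u_x² + u_y² + u² + u_xy²`.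
The right-hand side is nonnegative, so the integral over `(0, x] × (0, y]` is at most the
integral over the whole rectangle.
-/

open MeasureTheory Set

noncomputable section

def partialFst (f : ℝ × ℝ → ℝ) (p : ℝ × ℝ) : ℝ := deriv (fun s => f (s, p.2)) p.1

def partialSnd (f : ℝ × ℝ → ℝ) (p : ℝ × ℝ) : ℝ := deriv (fun t => f (p.1, t)) p.2

def mixedEnergyDensity (f : ℝ × ℝ → ℝ) (p : ℝ × ℝ) : ℝ :=
  partialSnd (partialFst f) p ^ 2 + (partialFst f p ^ 2 + partialSnd f p ^ 2) + f p ^ 2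

end

section PartialDerivatives

variable {f : ℝ × ℝ → ℝ} {s t : ℝ}

theorem DifferentiableAt.hasDerivAt_partialFst (hf : DifferentiableAt ℝ f (s, t)) :
    HasDerivAt (fun s => f (s, t)) (partialFst f (s, t)) s :=
  (hf.comp s (differentiableAt_id.prodMk (differentiableAt_const t))).hasDerivAt

theorem DifferentiableAt.hasDerivAt_partialSnd (hf : DifferentiableAt ℝ f (s, t)) :
    HasDerivAt (fun t => f (s, t)) (partialSnd f (s, t)) t :=
  (hf.comp t ((differentiableAt_const s).prodMk differentiableAt_id)).hasDerivAt

theorem DifferentiableAt.partialFst_eq_fderiv (hf : DifferentiableAt ℝ f (s, t)) :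
    partialFst f (s, t) = fderiv ℝ f (s, t) (1, 0) :=
  (hf.hasFDerivAt.comp_hasDerivAt s ((hasDerivAt_id s).prodMk (hasDerivAt_const s t))).deriv

theorem DifferentiableAt.partialSnd_eq_fderiv (hf : DifferentiableAt ℝ f (s, t)) :
    partialSnd f (s, t) = fderiv ℝ f (s, t) (0, 1) :=
  (hf.hasFDerivAt.comp_hasDerivAt t ((hasDerivAt_const t s).prodMk (hasDerivAt_id t))).deriv

variable {m n : WithTop ℕ∞}

theorem ContDiff.partialFst (hf : ContDiff ℝ n f) (hmn : m + 1 ≤ n) :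
    ContDiff ℝ m (partialFst f) := by
  have hd : Differentiable ℝ f :=
    hf.differentiable (ne_bot_of_le_ne_bot one_ne_zero (le_add_self.trans hmn))
  rw [show _root_.partialFst f = fun p => fderiv ℝ f p (1, 0) from
    funext fun p => (hd p).partialFst_eq_fderiv]
  exact (hf.fderiv_right hmn).clm_apply contDiff_const

theorem ContDiff.partialSnd (hf : ContDiff ℝ n f) (hmn : m + 1 ≤ n) :
    ContDiff ℝ m (partialSnd f) := by
  have hd : Differentiable ℝ f :=
    hf.differentiable (ne_bot_of_le_ne_bot one_ne_zero (le_add_self.trans hmn))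
  rw [show _root_.partialSnd f = fun p => fderiv ℝ f p (0, 1) from
    funext fun p => (hd p).partialSnd_eq_fderiv]
  exact (hf.fderiv_right hmn).clm_apply contDiff_const

theorem ContDiff.continuous_partialFst (hf : ContDiff ℝ n f) (hn : 1 ≤ n) :
    Continuous (_root_.partialFst f) :=
  (hf.partialFst (m := 0) (by simpa using hn)).continuous

theorem ContDiff.continuous_partialSnd (hf : ContDiff ℝ n f) (hn : 1 ≤ n) :
    Continuous (_root_.partialSnd f) :=
  (hf.partialSnd (m := 0) (by simpa using hn)).continuous

end PartialDerivatives

theorem Continuous.integrableOn_of_isBounded {X E : Type*} [MetricSpace X] [ProperSpace X]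
    [MeasurableSpace X] [OpensMeasurableSpace X] [NormedAddCommGroup E] {μ : Measure X}
    [IsFiniteMeasureOnCompacts μ] {g : X → E} (hg : Continuous g) {s : Set X}
    (hs : Bornology.IsBounded s) : IntegrableOn g s μ :=
  (hg.continuousOn.integrableOn_compact hs.isCompact_closure).mono_set subset_closure

section Rectangle

variable {f g : ℝ × ℝ → ℝ}

theorem eq_integral_partialSnd_partialFst (hg : ContDiff ℝ 2 g) (hg_fst : ∀ t, g (0, t) = 0)
    (hg_snd : ∀ s, g (s, 0) = 0) (x y : ℝ) :
    g (x, y) = ∫ s in 0..x, ∫ t in 0..y, partialSnd (partialFst g) (s, t) := by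
  have hg₁ : ContDiff ℝ 1 (partialFst g) := hg.partialFst (by norm_num)
  have hg₀ : ContDiff ℝ 0 (partialSnd (partialFst g)) := hg₁.partialSnd (by norm_num)
  have hfst_axis : ∀ s, partialFst g (s, 0) = 0 := fun s => by simp [partialFst, hg_snd]
  have inner : ∀ s, ∫ t in 0..y, partialSnd (partialFst g) (s, t) = partialFst g (s, y) := by
    intro s
    rw [intervalIntegral.integral_eq_sub_of_hasDerivAt
      (fun t _ => (hg₁.differentiable one_ne_zero (s, t)).hasDerivAt_partialSnd)
      ((hg₀.continuous.comp (.prodMk_right s)).intervalIntegrable _ _),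
      hfst_axis, sub_zero]
  simp_rw [inner]
  rw [intervalIntegral.integral_eq_sub_of_hasDerivAt
    (fun s _ => (hg.differentiable two_ne_zero (s, y)).hasDerivAt_partialFst)
    ((hg₁.continuous.comp (.prodMk_left y)).intervalIntegrable _ _),
    hg_fst, sub_zero]

theorem partialSnd_partialFst_sq (hf : ContDiff ℝ 2 f) (p : ℝ × ℝ) :
    partialSnd (partialFst fun q => f q ^ 2) p =
      2 * (partialFst f p * partialSnd f p + f p * partialSnd (partialFst f) p) := by
  have hd := hf.differentiable two_ne_zero
  have hfst : partialFst (fun q => f q ^ 2) = fun q => 2 * f q * partialFst f q := by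
    ext ⟨s, t⟩
    exact ((hd (s, t)).hasDerivAt_partialFst.pow 2).deriv.trans (by norm_num)
  obtain ⟨s, t⟩ := p
  rw [hfst]
  change deriv ((fun t => 2 * f (s, t)) * fun t => partialFst f (s, t)) t = _
  rw [(((hd (s, t)).hasDerivAt_partialSnd.const_mul 2).mul
    ((hf.partialFst (m := 1) (by norm_num)).differentiable one_ne_zero
      (s, t)).hasDerivAt_partialSnd).deriv]
  ring

theorem intervalIntegral_intervalIntegral_eq_setIntegral_Ioc_prod {a b c d : ℝ}
    (hab : a ≤ b) (hcd : c ≤ d) (hg : IntegrableOn g (Ioc a b ×ˢ Ioc c d)) :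
    ∫ s in a..b, ∫ t in c..d, g (s, t) = ∫ p in Ioc a b ×ˢ Ioc c d, g p := by
  simp_rw [intervalIntegral.integral_of_le hab, intervalIntegral.integral_of_le hcd]
  rw [Measure.volume_eq_prod] at hg ⊢
  exact (setIntegral_prod g hg).symm

theorem mixedEnergyDensity_nonneg (p : ℝ × ℝ) : 0 ≤ mixedEnergyDensity f p := by
  unfold mixedEnergyDensity; positivity

theorem continuous_mixedEnergyDensity (hf : ContDiff ℝ 2 f) :
    Continuous (mixedEnergyDensity f) := by
  have h₂₁ := (hf.partialFst (m := 1) (by norm_num)).continuous_partialSnd le_rfl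
  have h₁ := hf.continuous_partialFst (by norm_num)
  have h₂ := hf.continuous_partialSnd (by norm_num)
  unfold mixedEnergyDensity
  fun_prop

theorem integral_mixedEnergyDensity (hf : ContDiff ℝ 2 f) {s : Set (ℝ × ℝ)}
    (hs : Bornology.IsBounded s) :
    ∫ p in s, mixedEnergyDensity f p =
      (∫ p in s, partialSnd (partialFst f) p ^ 2) +
        (∫ p in s, (partialFst f p ^ 2 + partialSnd f p ^ 2)) + ∫ p in s, f p ^ 2 := by
  have h₂₁ := (hf.partialFst (m := 1) (by norm_num)).continuous_partialSnd le_rfl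
  have h₁ := hf.continuous_partialFst (by norm_num)
  have h₂ := hf.continuous_partialSnd (by norm_num)
  have h₀ := hf.continuous
  unfold mixedEnergyDensity
  rw [integral_add ((by fun_prop : Continuous _).integrableOn_of_isBounded hs)
      ((by fun_prop : Continuous _).integrableOn_of_isBounded hs),
    integral_add ((by fun_prop : Continuous _).integrableOn_of_isBounded hs)
      ((by fun_prop : Continuous _).integrableOn_of_isBounded hs)]

theorem sq_le_setIntegral_mixedEnergyDensity (hf : ContDiff ℝ 2 f) (hf_fst : ∀ t, f (0, t) = 0)
    (hf_snd : ∀ s, f (s, 0) = 0) {x y : ℝ} (hx : 0 ≤ x) (hy : 0 ≤ y) :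
    f (x, y) ^ 2 ≤ ∫ p in Ioc 0 x ×ˢ Ioc 0 y, mixedEnergyDensity f p := by
  have hbox : Bornology.IsBounded (Ioc 0 x ×ˢ Ioc 0 y) :=
    (Metric.isBounded_Ioc 0 x).prod (Metric.isBounded_Ioc 0 y)
  have hsq : ContDiff ℝ 2 fun p => f p ^ 2 := hf.pow 2
  have hsq₀ : Continuous (partialSnd (partialFst fun p => f p ^ 2)) :=
    (hsq.partialFst (m := 1) (by norm_num)).continuous_partialSnd le_rfl
  rw [eq_integral_partialSnd_partialFst (g := fun p => f p ^ 2) hsq (by simp [hf_fst])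
    (by simp [hf_snd]), intervalIntegral_intervalIntegral_eq_setIntegral_Ioc_prod hx hy
    (hsq₀.integrableOn_of_isBounded hbox)]
  refine setIntegral_mono_on (hsq₀.integrableOn_of_isBounded hbox)
    ((continuous_mixedEnergyDensity hf).integrableOn_of_isBounded hbox)
    (measurableSet_Ioc.prod measurableSet_Ioc) fun p _ => ?_
  rw [partialSnd_partialFst_sq hf, mixedEnergyDensity]
  nlinarith [two_mul_le_add_sq (partialFst f p) (partialSnd f p),
    two_mul_le_add_sq (f p) (partialSnd (partialFst f) p)]

end Rectangle

theorem sup_bound_by_mixed_derivative_general (L B : ℝ)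
    (u : ℝ → ℝ → ℝ) (hu : ContDiff ℝ 2 (Function.uncurry u))
    (hbx : ∀ y, u 0 y = 0 ∧ u L y = 0)
    (hby : ∀ x, u x 0 = 0 ∧ u x B = 0) :
    ∀ x ∈ Ioo 0 L, ∀ y ∈ Ioo 0 B,
      (u x y) ^ 2 ≤
        (∫ p in Ioo 0 L ×ˢ Ioo 0 B,
            (deriv (fun t => deriv (fun s => u s t) p.1) p.2) ^ 2)
          + (∫ p in Ioo 0 L ×ˢ Ioo 0 B,
              ((deriv (fun s => u s p.2) p.1) ^ 2 + (deriv (u p.1) p.2) ^ 2))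
          + (∫ p in Ioo 0 L ×ˢ Ioo 0 B, (u p.1 p.2) ^ 2) := by
  intro x hx y hy
  have hD : Bornology.IsBounded (Ioo 0 L ×ˢ Ioo 0 B) :=
    (Metric.isBounded_Ioo 0 L).prod (Metric.isBounded_Ioo 0 B)
  calc u x y ^ 2
      ≤ ∫ p in Ioc 0 x ×ˢ Ioc 0 y, mixedEnergyDensity (Function.uncurry u) p :=
        sq_le_setIntegral_mixedEnergyDensity hu (fun t => (hbx t).1) (fun s => (hby s).1)
          hx.1.le hy.1.le
    _ ≤ ∫ p in Ioo 0 L ×ˢ Ioo 0 B, mixedEnergyDensity (Function.uncurry u) p :=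
        setIntegral_mono_set ((continuous_mixedEnergyDensity hu).integrableOn_of_isBounded hD)
          (.of_forall mixedEnergyDensity_nonneg)
          (prod_mono (Ioc_subset_Ioo_right hx.2) (Ioc_subset_Ioo_right hy.2)).eventuallyLE
    -- the integrands of the statement are those of `mixedEnergyDensity` with `partialFst`,
    -- `partialSnd` unfolded
    _ = _ := integral_mixedEnergyDensity hu hD

/-- Pointwise bound on the rectangle `D = (0,L)×(0,B)`:
for `u ∈ H²(D) ∩ H¹₀(D)`, `sup_D u² ≤ ‖u_{xy}‖² + ‖∇u‖² + ‖u‖²`. -/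
theorem sup_bound_by_mixed_derivative (L B : ℝ) (hL : 0 < L) (hB : 0 < B)
    (u : ℝ → ℝ → ℝ) (hu : ContDiff ℝ 2 (Function.uncurry u))
    (hbx : ∀ y, u 0 y = 0 ∧ u L y = 0)
    (hby : ∀ x, u x 0 = 0 ∧ u x B = 0) :
    ∀ x ∈ Ioo 0 L, ∀ y ∈ Ioo 0 B,
      (u x y) ^ 2 ≤
        (∫ p in Ioo 0 L ×ˢ Ioo 0 B,
            (deriv (fun t => deriv (fun s => u s t) p.1) p.2) ^ 2)
          + (∫ p in Ioo 0 L ×ˢ Ioo 0 B,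
              ((deriv (fun s => u s p.2) p.1) ^ 2 + (deriv (u p.1) p.2) ^ 2))
          + (∫ p in Ioo 0 L ×ˢ Ioo 0 B, (u p.1 p.2) ^ 2) :=
  sup_bound_by_mixed_derivative_general L B u hu hbx hby
end

section
/- Let f : [0,∞) → [0,∞) be differentiable and satisfy f'(t) + (χ + (α − k·f(t)))·f(t) ≤ 0 for all t > 0 with χ > 0, k > 0, and α − k·f(0) > 0. Then f(t) ≤ f(0)·e^{−χt} for all t ≥ 0. -/
open Filter Topology

/-- Barrier step: on `[s, b]` with `s > 0`, if the relaxed barrier dominates initially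
then it dominates throughout. -/
lemma combined_decay_aux (χ α k : ℝ) (hχ : 0 < χ) (hk : 0 < k) (f : ℝ → ℝ)
    (hf : Differentiable ℝ f)
    (hfnn : ∀ t ≥ (0:ℝ), 0 ≤ f t)
    (hineq : ∀ t > (0:ℝ), deriv f t + (χ + (α - k * f t)) * f t ≤ 0)
    (s ε χ' b : ℝ) (hs : 0 < s) (hε : 0 < ε) (hχ'0 : 0 < χ') (hχ' : χ' < χ)
    (hsmall : k * (f s + ε) ≤ α) :
    ∀ t ∈ Set.Icc s b, f t ≤ (f s + ε) * Real.exp (-χ' * (t - s)) := by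
  have hfs : 0 ≤ f s := hfnn s hs.le
  have hfsε : 0 < f s + ε := by linarith
  set B : ℝ → ℝ := fun x => (f s + ε) * Real.exp (-χ' * (x - s)) with hB
  have hBderiv : ∀ x : ℝ, HasDerivAt B ((f s + ε) * (Real.exp (-χ' * (x - s)) * -χ')) x := by
    intro x
    have h1 : HasDerivAt (fun x : ℝ => -χ' * (x - s)) (-χ') x := by
      simpa using ((hasDerivAt_id x).sub_const s).const_mul (-χ')
    exact (h1.exp.const_mul (f s + ε))
  intro t ht
  refine image_le_of_deriv_right_lt_deriv_boundary'
    (f := f) (f' := deriv f) (B := B)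
    (B' := fun x => (f s + ε) * (Real.exp (-χ' * (x - s)) * -χ'))
    hf.continuous.continuousOn
    (fun x _ => (hf x).hasDerivAt.hasDerivWithinAt) ?_ ?_ ?_ ?_ ht
  · have : B s = f s + ε := by simp [hB]
    rw [this]; linarith
  · exact (Continuous.continuousOn (by continuity))
  · exact fun x _ => (hBderiv x).hasDerivWithinAt
  · intro x hx heq
    have hx0 : 0 < x := lt_of_lt_of_le hs hx.1
    have hexp : 0 < Real.exp (-χ' * (x - s)) := Real.exp_pos _
    have hexple : Real.exp (-χ' * (x - s)) ≤ 1 := by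
      apply Real.exp_le_one_iff.2
      nlinarith [hx.1]
    have hfx : 0 < f x := by rw [heq]; positivity
    have heq' : f x = (f s + ε) * Real.exp (-χ' * (x - s)) := by
      simpa [hB] using heq
    have hfxle : f x ≤ f s + ε := by nlinarith
    have hαfx : 0 ≤ α - k * f x := by nlinarith
    have h := hineq x hx0
    have hBx : B x = f x := heq.symm
    simp only [hB] at hBx
    show deriv f x < (f s + ε) * (Real.exp (-χ' * (x - s)) * -χ')
    nlinarith

/-- Combined decay argument (Theorem 6.3): if `f : [0,∞) → [0,∞)` is differentiable with
`f'(t) + (χ + (α - k f(t))) f(t) ≤ 0` for `t > 0`, `χ > 0`, `k > 0` and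
`α - k f(0) > 0`, then `f(t) ≤ f(0) e^{-χ t}` for all `t ≥ 0`. -/
theorem combined_decay (χ α k : ℝ) (hχ : 0 < χ) (hk : 0 < k) (f : ℝ → ℝ)
    (hf : Differentiable ℝ f)
    (hfnn : ∀ t ≥ (0:ℝ), 0 ≤ f t)
    (hineq : ∀ t > (0:ℝ), deriv f t + (χ + (α - k * f t)) * f t ≤ 0)
    (hinit : 0 < α - k * f 0) :
    ∀ t ≥ (0:ℝ), f t ≤ f 0 * Real.exp (-χ * t) := by
  intro t ht
  rcases eq_or_lt_of_le ht with h0 | ht0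
  · simp [← h0]
  -- sequence uₙ = 1/(n+1) → 0
  have hu : Tendsto (fun n : ℕ => 1 / ((n : ℝ) + 1)) atTop (𝓝 0) :=
    tendsto_one_div_add_atTop_nhds_zero_nat
  have hfc : Tendsto (fun n : ℕ => f (1 / ((n : ℝ) + 1))) atTop (𝓝 (f 0)) := by
    have := (hf.continuous.continuousAt (x := (0:ℝ))).tendsto
    exact this.comp hu
  -- the RHS sequence
  have hR : Tendsto (fun n : ℕ => (f (1 / ((n : ℝ) + 1)) + 1 / ((n : ℝ) + 1)) *
      Real.exp (-(χ - 1 / ((n : ℝ) + 1)) * (t - 1 / ((n : ℝ) + 1)))) atTop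
      (𝓝 (f 0 * Real.exp (-χ * t))) := by
    have h1 : Tendsto (fun n : ℕ => f (1 / ((n : ℝ) + 1)) + 1 / ((n : ℝ) + 1)) atTop
        (𝓝 (f 0)) := by simpa using hfc.add hu
    have h2 : Tendsto (fun n : ℕ => -(χ - 1 / ((n : ℝ) + 1)) * (t - 1 / ((n : ℝ) + 1))) atTop
        (𝓝 (-χ * t)) := by
      have := ((hu.const_sub χ).neg.mul (hu.const_sub t))
      simpa using this
    exact h1.mul (Real.continuous_exp.continuousAt.tendsto.comp h2)
  refine ge_of_tendsto hR ?_
  -- eventual bound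
  have hev1 : ∀ᶠ n : ℕ in atTop, 1 / ((n : ℝ) + 1) ≤ t := by
    filter_upwards [hu.eventually_le_const ht0] with n hn using hn
  have hev2 : ∀ᶠ n : ℕ in atTop, 1 / ((n : ℝ) + 1) < χ := by
    exact hu.eventually_lt_const hχ
  have hev3 : ∀ᶠ n : ℕ in atTop,
      k * (f (1 / ((n : ℝ) + 1)) + 1 / ((n : ℝ) + 1)) ≤ α := by
    have h1 : Tendsto (fun n : ℕ => k * (f (1 / ((n : ℝ) + 1)) + 1 / ((n : ℝ) + 1))) atTop
        (𝓝 (k * f 0)) := by simpa using (hfc.add hu).const_mul k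
    have : k * f 0 < α := by linarith
    filter_upwards [h1.eventually_lt_const this] with n hn using hn.le
  filter_upwards [hev1, hev2, hev3] with n hn1 hn2 hn3
  have hupos : 0 < 1 / ((n : ℝ) + 1) := by positivity
  exact combined_decay_aux χ α k hχ hk f hf hfnn hineq
    (1 / ((n : ℝ) + 1)) (1 / ((n : ℝ) + 1)) (χ - 1 / ((n : ℝ) + 1)) t
    hupos hupos (by linarith) (by linarith) hn3 t ⟨hn1, le_refl t⟩
end
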